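/- Let n ≥ 3 and a_1,...,a_n be reals with a_i ≠ 0 for all i ≠ k and S := ∑_{i≠k} a_i² > 0. Then (1/(n-1)) ∑_{i≠k} (1/2)·log(S/(S - a_i²)) ≥ (1/2)·log((n-1)/(n-2)), with equality iff all a_i² for i ≠ k are equal. -/

import Mathlib

open Finset

/-- The average per-node leakage `(1/(n-1)) ∑_{i≠k} (1/2) log (S/(S - a i ^2))`
with `S = ∑_{i≠k} a i ^ 2` is lower-bounded by `(1/2) log ((n-1)/(n-2))`,
with equality iff all `a i ^ 2`, `i ≠ k`, are equal. -/
theorem stmt_6 (n : ℕ) (hn : 3 ≤ n) (a : Fin n → ℝ) (k : Fin n)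
    (ha : ∀ i, i ≠ k → a i ≠ 0)
    (S : ℝ) (hS : S = ∑ i ∈ Finset.univ.erase k, (a i) ^ 2)
    (hSpos : 0 < S) (hlt : ∀ i, i ≠ k → (a i) ^ 2 < S) :
    (1 / ((n : ℝ) - 1)) * ∑ i ∈ Finset.univ.erase k,
        (1 / 2 : ℝ) * Real.log (S / (S - (a i) ^ 2)) ≥
      (1 / 2 : ℝ) * Real.log (((n : ℝ) - 1) / ((n : ℝ) - 2)) ∧
    ((1 / ((n : ℝ) - 1)) * ∑ i ∈ Finset.univ.erase k,
        (1 / 2 : ℝ) * Real.log (S / (S - (a i) ^ 2)) =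
      (1 / 2 : ℝ) * Real.log (((n : ℝ) - 1) / ((n : ℝ) - 2)) ↔
      ∀ i j, i ≠ k → j ≠ k → (a i) ^ 2 = (a j) ^ 2) := by
  classical
  set t := Finset.univ.erase k with ht
  have hmem : ∀ i ∈ t, i ≠ k := fun i hi => (Finset.mem_erase.mp hi).1
  have hmem' : ∀ i, i ≠ k → i ∈ t := fun i hi =>
    Finset.mem_erase.mpr ⟨hi, Finset.mem_univ i⟩
  have hnR : (3 : ℝ) ≤ (n : ℝ) := by exact_mod_cast hn
  have hm : (0 : ℝ) < (n : ℝ) - 1 := by linarith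
  have hm2 : (0 : ℝ) < (n : ℝ) - 2 := by linarith
  set m := (n : ℝ) - 1 with hm_def
  have hcard : t.card = n - 1 := by
    rw [ht, Finset.card_erase_of_mem (Finset.mem_univ k), Finset.card_univ, Fintype.card_fin]
  have hcardR : (t.card : ℝ) = m := by
    rw [hcard, hm_def, Nat.cast_sub (by omega)]; norm_num
  set w : Fin n → ℝ := fun _ => 1 / m with hw_def
  set p : Fin n → ℝ := fun i => S - a i ^ 2 with hp_def
  have hwpos : ∀ i ∈ t, 0 < w i := fun i _ => by
    rw [hw_def]; exact one_div_pos.mpr hm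
  have hppos : ∀ i ∈ t, 0 < p i := fun i hi => by
    have := hlt i (hmem i hi); rw [hp_def]; dsimp only; linarith
  have hw1 : ∑ i ∈ t, w i = 1 := by
    rw [hw_def]
    rw [Finset.sum_const, nsmul_eq_mul, hcardR]
    field_simp
  have hpmem : ∀ i ∈ t, p i ∈ Set.Ioi (0:ℝ) := fun i hi => Set.mem_Ioi.mpr (hppos i hi)
  set C := ∑ i ∈ t, w i • p i with hC
  set E := ∑ i ∈ t, w i • Real.log (p i) with hE
  have hCval : C = (((n : ℝ) - 2) / m) * S := by
    rw [hC]
    simp only [smul_eq_mul, hw_def, hp_def]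
    rw [← Finset.mul_sum, Finset.sum_sub_distrib, Finset.sum_const, ← hS, nsmul_eq_mul, hcardR]
    field_simp
    ring
  have hjle : E ≤ Real.log C :=
    strictConcaveOn_log_Ioi.concaveOn.le_map_sum (fun i hi => (hwpos i hi).le) hw1 hpmem
  have hjeq : Real.log C = E ↔ ∀ j ∈ t, p j = C :=
    strictConcaveOn_log_Ioi.map_sum_eq_iff hwpos hw1 hpmem
  have hlogC : Real.log C = Real.log ((n : ℝ) - 2) - Real.log m + Real.log S := by
    rw [hCval, Real.log_mul (by positivity) hSpos.ne', Real.log_div hm2.ne' hm.ne']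
  have hEsum : E = (1 / m) * ∑ i ∈ t, Real.log (p i) := by
    rw [hE]; simp only [smul_eq_mul, hw_def]; rw [Finset.mul_sum]
  have hL : (1 / m) * ∑ i ∈ t, (1 / 2 : ℝ) * Real.log (S / (S - a i ^ 2)) =
      (1 / 2) * (Real.log S - E) := by
    have hterm : ∀ i ∈ t, (1 / 2 : ℝ) * Real.log (S / (S - a i ^ 2)) =
        (1 / 2) * Real.log S - (1 / 2) * Real.log (p i) := by
      intro i hi
      have hpi : p i = S - a i ^ 2 := rfl
      rw [← hpi, Real.log_div hSpos.ne' (hppos i hi).ne']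
      ring
    rw [Finset.sum_congr rfl hterm, Finset.sum_sub_distrib, Finset.sum_const, nsmul_eq_mul,
      hcardR, ← Finset.mul_sum, hEsum]
    field_simp
  have hR : (1 / 2 : ℝ) * Real.log (m / ((n : ℝ) - 2)) =
      (1 / 2) * (Real.log m - Real.log ((n : ℝ) - 2)) := by
    rw [Real.log_div hm.ne' hm2.ne']
  constructor
  · rw [hL, hR]; linarith
  · rw [hL, hR]
    constructor
    · intro heq i j hi hj
      have hEC : Real.log C = E := by linarith
      have hall := hjeq.mp hEC
      have h1 := hall i (hmem' i hi)
      have h2 := hall j (hmem' j hj)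
      have : p i = p j := h1.trans h2.symm
      rw [hp_def] at this
      dsimp only at this
      linarith
    · intro hall
      have hpj : ∀ j ∈ t, p j = C := by
        intro j hj
        have hcong : ∀ i ∈ t, w i • p i = w i * p j := by
          intro i hi
          have hij : a i ^ 2 = a j ^ 2 := hall i j (hmem i hi) (hmem j hj)
          rw [hp_def]
          simp only [smul_eq_mul, hij]
        rw [hC, Finset.sum_congr rfl hcong, ← Finset.sum_mul, hw1, one_mul]
      have hEC : Real.log C = E := hjeq.mpr hpj
      linarith
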